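/- Let (T, s) be a signed triangulation of a convex polygon with associated proper 4-colouring of the vertices. For any vertex x of the polygon, the weight p(x) equals 0 (mod 3) if and only if the two neighbours of x along the polygon boundary have the same colour. -/

import Mathlib

/-!
Around a vertex `x` its neighbours `y₀ = x + 1, y₁, …, y_k = x - 1`, in counterclockwise order,
are consecutively adjacent (by maximality of the triangulation), and the triangles at `x` are
exactly the `{x, yᵢ, yᵢ₊₁}`. The colours of the `yᵢ` avoid the colour of `x`; identifying the
three remaining colours with `ZMod 3`, every step `c(yᵢ₊₁) - c(yᵢ)` is nonzero, and the
quadrilateral rule at the diagonal `{x, yᵢ₊₁}` says that two consecutive steps cancel exactly when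
the signs `sᵢ, sᵢ₊₁` of the adjacent triangles differ. Hence the `i`-th step is `ε sᵢ` for a fixed
`ε ≠ 0`, and `c(x - 1) - c(x + 1) = ε p(x)`.
-/

namespace PolyFlip


/-- Two vertices of the convex `N`-gon are consecutive along the boundary. -/
def BdryAdj (N : ℕ) (i j : Fin N) : Prop :=
  (i.val + 1) % N = j.val ∨ (j.val + 1) % N = i.val

/-- `d` is a diagonal of the convex `N`-gon: an unordered pair of distinct,
non-consecutive vertices. -/
def IsDiag (N : ℕ) (d : Finset (Fin N)) : Prop :=
  ∃ i j : Fin N, i ≠ j ∧ ¬ BdryAdj N i j ∧ d = {i, j}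

/-- The chord `d` crosses the chord `e` (in this orientation): the endpoints
interlace in the cyclic (here: linear) order of the polygon's vertices. -/
def Crosses {N : ℕ} (d e : Finset (Fin N)) : Prop :=
  ∃ a b c f : Fin N, d = {a, b} ∧ e = {c, f} ∧ a < c ∧ c < b ∧ b < f

/-- A triangulation of the convex `N`-gon: a maximal set of pairwise
non-crossing diagonals. -/
structure Triangulation (N : ℕ) where
  diags : Finset (Finset (Fin N))
  isDiag : ∀ d ∈ diags, IsDiag N d
  noncross : ∀ d ∈ diags, ∀ e ∈ diags, ¬ Crosses d e
  maximal : ∀ d, IsDiag N d → (∀ e ∈ diags, ¬ Crosses d e ∧ ¬ Crosses e d) → d ∈ diags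

/-- `a` and `b` are joined by an edge of the triangulated polygon:
either a boundary edge, or a diagonal of the triangulation. -/
def IsEdge {N : ℕ} (T : Triangulation N) (a b : Fin N) : Prop :=
  a ≠ b ∧ (BdryAdj N a b ∨ ({a, b} : Finset (Fin N)) ∈ T.diags)

/-- `t` is a triangle (face) of the triangulation `T`. -/
def IsTriangle {N : ℕ} (T : Triangulation N) (t : Finset (Fin N)) : Prop :=
  ∃ a b c : Fin N, a ≠ b ∧ a ≠ c ∧ b ≠ c ∧ t = {a, b, c} ∧
    IsEdge T a b ∧ IsEdge T a c ∧ IsEdge T b c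

/-- A coloured triangulation: a triangulation together with a colour in
`Fin m` for each of its triangles. -/
structure ColouredTri (N m : ℕ) where
  T : Triangulation N
  col : {t : Finset (Fin N) // IsTriangle T t} → Fin m

/-- The degree of a vertex `x` in the triangulated polygon. -/
noncomputable def degree {N : ℕ} (T : Triangulation N) (x : Fin N) : ℕ :=
  Nat.card {y : Fin N // IsEdge T x y}

/-- The `σ`-flip at the diagonal `d`: `d = {a,b}` is a diagonal of `C` whose two
incident triangles `{a,b,x}` and `{a,b,y}` have the same colour `i`; it is replaced by
the other diagonal `{x,y}` of the quadrilateral, the two new triangles `{a,x,y}` and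
`{b,x,y}` get colour `σ i`, and all other triangles keep their colours. -/
def SFlipAt {N m : ℕ} (σ : Equiv.Perm (Fin m)) (d : Finset (Fin N))
    (C C' : ColouredTri N m) : Prop :=
  ∃ (a b x y : Fin N) (h₁ : IsTriangle C.T {a, b, x}) (h₂ : IsTriangle C.T {a, b, y})
    (h₁' : IsTriangle C'.T {a, x, y}) (h₂' : IsTriangle C'.T {b, x, y}),
    d = {a, b} ∧ d ∈ C.T.diags ∧ x ≠ y ∧
    C.col ⟨{a, b, x}, h₁⟩ = C.col ⟨{a, b, y}, h₂⟩ ∧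
    C'.T.diags = insert {x, y} (C.T.diags.erase d) ∧
    C'.col ⟨{a, x, y}, h₁'⟩ = σ (C.col ⟨{a, b, x}, h₁⟩) ∧
    C'.col ⟨{b, x, y}, h₂'⟩ = σ (C.col ⟨{a, b, x}, h₁⟩) ∧
    ∀ (t : Finset (Fin N)) (ht : IsTriangle C.T t) (ht' : IsTriangle C'.T t),
      t ≠ {a, b, x} → t ≠ {a, b, y} → C'.col ⟨t, ht'⟩ = C.col ⟨t, ht⟩

/-- The `σ`-flip relation. -/
def SFlip {N m : ℕ} (σ : Equiv.Perm (Fin m)) (C C' : ColouredTri N m) : Prop :=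
  ∃ d, SFlipAt σ d C C'

/-- The 2-coloured flip at a diagonal (the colour permutation swaps the two colours). -/
abbrev Flip2At {N : ℕ} (d : Finset (Fin N)) (C C' : ColouredTri N 2) : Prop :=
  SFlipAt (finRotate 2) d C C'

/-- The 2-coloured flip relation. -/
abbrev Flip2 {N : ℕ} (C C' : ColouredTri N 2) : Prop :=
  SFlip (finRotate 2) C C'

/-- The 2-coloured flip graph of the convex `N`-gon: vertices are the 2-coloured
triangulations, edges are single 2-coloured flips. -/
def flipGraph (N : ℕ) : SimpleGraph (ColouredTri N 2) where
  Adj C C' := C ≠ C' ∧ (Flip2 C C' ∨ Flip2 C' C)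
  symm := ⟨fun C C' h => ⟨h.1.symm, h.2.symm⟩⟩
  loopless := ⟨fun C h => h.1 rfl⟩

/-- The sign (`+1` for colour `0`, `-1` for colour `1`) of a colour, in `ZMod 3`. -/
def signVal (c : Fin 2) : ZMod 3 := if c = 0 then 1 else -1

/-- The weight of a vertex `x`: the sum, modulo 3, of the signs of all triangles
incident with `x`. -/
noncomputable def weight {N : ℕ} (C : ColouredTri N 2) (x : Fin N) : ZMod 3 :=
  ∑ᶠ t : {t : Finset (Fin N) // IsTriangle C.T t},
    if x ∈ t.val then signVal (C.col t) else 0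

/-- The number of triangles coloured `+1` (colour `0`). -/
noncomputable def plusCount {N : ℕ} (C : ColouredTri N 2) : ℕ :=
  Nat.card {t : {t : Finset (Fin N) // IsTriangle C.T t} // C.col t = 0}

/-- Adjacency in the `k`-dimensional hypercube: the two vertices differ in
exactly one coordinate. -/
def cubeAdj (k : ℕ) (u v : Fin k → Bool) : Prop := ∃! i, u i ≠ v i

/-- The `k`-dimensional hypercube graph on `{0,1}^k`. -/
def cubeGraph (k : ℕ) : SimpleGraph (Fin k → Bool) where
  Adj := cubeAdj k
  symm := ⟨by
    rintro u v ⟨i, hi, hu⟩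
    exact ⟨i, hi.symm, fun j hj => hu j hj.symm⟩⟩
  loopless := ⟨by
    rintro u ⟨i, hi, -⟩
    exact hi rfl⟩

/-- `f` exhibits a `k`-dimensional hypercube inside the connected component of `C`
in the 2-coloured flip graph. -/
def CubeEmb {N : ℕ} (C : ColouredTri N 2) (k : ℕ)
    (f : (Fin k → Bool) → ColouredTri N 2) : Prop :=
  Function.Injective f ∧
  (∀ u v, cubeAdj k u v → (flipGraph N).Adj (f u) (f v)) ∧
  ∀ u, (flipGraph N).Reachable C (f u)

/-- `G` contains a subdivision (topological copy) of `H`: there are branch vertices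
`f w` for the vertices `w` of `H` and internally disjoint paths in `G` between them
realising the edges of `H`. -/
def ContainsSubdivision {V W : Type*} (G : SimpleGraph V) (H : SimpleGraph W) : Prop :=
  ∃ f : W → V, Function.Injective f ∧
    ∃ P : ∀ u v : W, H.Adj u v → G.Walk (f u) (f v),
      (∀ u v (h : H.Adj u v), (P u v h).IsPath) ∧
      (∀ u v (h : H.Adj u v) (w : W), f w ∈ (P u v h).support → w = u ∨ w = v) ∧
      (∀ u₁ v₁ (h₁ : H.Adj u₁ v₁) u₂ v₂ (h₂ : H.Adj u₂ v₂),
        (s(u₁, v₁) : Sym2 W) ≠ s(u₂, v₂) →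
        ∀ x, x ∈ (P u₁ v₁ h₁).support → x ∈ (P u₂ v₂ h₂).support →
          (x = f u₁ ∨ x = f v₁) ∧ (x = f u₂ ∨ x = f v₂))

/-- Planarity, via Kuratowski's characterisation: a graph is planar iff it contains
no subdivision of `K₅` and no subdivision of `K₃,₃`. -/
def IsPlanar {V : Type*} (G : SimpleGraph V) : Prop :=
  ¬ ContainsSubdivision G (SimpleGraph.completeGraph (Fin 5)) ∧
  ¬ ContainsSubdivision G (completeBipartiteGraph (Fin 3) (Fin 3))

/-- `col` is a proper 4-colouring of the vertices associated to the signed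
triangulation `C`: adjacent vertices get distinct colours, and in every
quadrilateral formed by two triangles sharing a diagonal, the two vertices not on
the diagonal have equal colours iff the two triangles have different signs. -/
def Compatible {N : ℕ} (C : ColouredTri N 2) (col : Fin N → Fin 4) : Prop :=
  (∀ a b : Fin N, IsEdge C.T a b → col a ≠ col b) ∧
  ∀ (a b x z : Fin N) (h₁ : IsTriangle C.T {a, b, x}) (h₂ : IsTriangle C.T {a, b, z}),
    x ≠ z → ({a, b} : Finset (Fin N)) ∈ C.T.diags →
    (col x = col z ↔ C.col ⟨{a, b, x}, h₁⟩ ≠ C.col ⟨{a, b, z}, h₂⟩)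


section Chords

variable {N : ℕ}

theorem pair_eq_pair_iff {α : Type*} [DecidableEq α] {a b c d : α} :
    ({a, b} : Finset α) = {c, d} ↔ a = c ∧ b = d ∨ a = d ∧ b = c := by
  rw [← Finset.coe_inj]
  push_cast
  exact Set.pair_eq_pair_iff

def Interlaced (d e : Finset (Fin N)) : Prop := Crosses d e ∨ Crosses e d

theorem Interlaced.symm {d e : Finset (Fin N)} (h : Interlaced d e) : Interlaced e d := Or.symm h

theorem crosses_of_lt {a b c f : Fin N} (h₁ : a < c) (h₂ : c < b) (h₃ : b < f) :
    Crosses {a, b} {c, f} :=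
  ⟨a, b, c, f, rfl, rfl, h₁, h₂, h₃⟩

theorem Interlaced.ne {a b c f : Fin N} (h : Interlaced {a, b} {c, f}) :
    a ≠ c ∧ a ≠ f ∧ b ≠ c ∧ b ≠ f ∧ c ≠ f := by
  rcases h with ⟨p, q, r, s, hd, he, h₁, h₂, h₃⟩ | ⟨p, q, r, s, he, hd, h₁, h₂, h₃⟩ <;>
  · rw [pair_eq_pair_iff] at hd he
    rcases hd with ⟨rfl, rfl⟩ | ⟨rfl, rfl⟩ <;> rcases he with ⟨rfl, rfl⟩ | ⟨rfl, rfl⟩ <;>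
      fin_omega

def cycPos (x y : Fin N) : ℕ := (y - x).val

def Between (x a b u : Fin N) : Prop :=
  cycPos x a < cycPos x u ∧ cycPos x u < cycPos x b ∨
    cycPos x b < cycPos x u ∧ cycPos x u < cycPos x a

theorem cycPos_lt (x y : Fin N) : cycPos x y < N := (y - x).isLt

theorem cycPos_cases (x y : Fin N) :
    x.val ≤ y.val ∧ cycPos x y = y.val - x.val ∨
      y.val < x.val ∧ cycPos x y = N + y.val - x.val := by
  rcases le_or_gt x y with h | h
  · exact Or.inl ⟨h, Fin.coe_sub_iff_le.mpr h⟩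
  · exact Or.inr ⟨h, Fin.coe_sub_iff_lt.mpr h⟩

variable [NeZero N]

theorem cycPos_zero (y : Fin N) : cycPos 0 y = y.val := by
  simp [cycPos]

theorem cycPos_self (x : Fin N) : cycPos x x = 0 := by
  simp [cycPos]

theorem cycPos_injective (x : Fin N) : Function.Injective (cycPos x) :=
  fun _ _ h => sub_left_injective (Fin.val_injective h)

theorem cycPos_eq_zero_iff {x y : Fin N} : cycPos x y = 0 ↔ y = x := by
  rw [← cycPos_self x, (cycPos_injective x).eq_iff]

theorem cycPos_add_one (x y : Fin N) :
    cycPos x (y + 1) = (cycPos x y + 1) % N := by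
  rw [cycPos, cycPos, ← sub_add_eq_add_sub, Fin.val_add, Fin.val_one', Nat.add_mod_mod]

theorem cycPos_add_self (x r : Fin N) : cycPos x (x + r) = r.val := by
  simp [cycPos]

theorem interlaced_iff_between_zero {a b c f : Fin N} (hac : a ≠ c) (haf : a ≠ f)
    (hbc : b ≠ c) (hbf : b ≠ f) (hcf : c ≠ f) :
    Interlaced {a, b} {c, f} ↔ (Between 0 a b c ↔ ¬ Between 0 a b f) := by
  simp only [Between, cycPos_zero]
  constructor
  · rintro (⟨p, q, r, s, hd, he, h₁, h₂, h₃⟩ | ⟨p, q, r, s, he, hd, h₁, h₂, h₃⟩) <;>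
    · rw [pair_eq_pair_iff] at hd he
      rcases hd with ⟨rfl, rfl⟩ | ⟨rfl, rfl⟩ <;> rcases he with ⟨rfl, rfl⟩ | ⟨rfl, rfl⟩ <;>
        fin_omega
  · intro h
    wlog hab : a < b generalizing a b
    · rw [Interlaced, Finset.pair_comm a b]
      exact this hbc hbf hac haf (by omega) (by fin_omega)
    wlog hcf' : c < f generalizing c f
    · rw [Interlaced, Finset.pair_comm c f]
      exact this hcf.symm haf hac hbf hbc (by omega) (by fin_omega)
    rcases lt_or_gt_of_ne hac with h' | h'
    · exact Or.inl (crosses_of_lt h' (by fin_omega) (by fin_omega))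
    · exact Or.inr (crosses_of_lt h' (by fin_omega) (by fin_omega))

/-- Moving the base point from `0` to `x` swaps the two arcs cut out by `a` and `b` exactly
when `x` lies in the half-open arc `(min a b, max a b]`. -/
theorem between_iff_between_zero_iff (x : Fin N) {a b u : Fin N} (hau : a ≠ u) (hbu : b ≠ u) :
    Between x a b u ↔ (Between 0 a b u ↔ ¬ (a < x ∧ x ≤ b ∨ b < x ∧ x ≤ a)) := by
  have := Fin.val_injective.ne hau
  have := Fin.val_injective.ne hbu
  have := x.isLt; have := u.isLt
  simp only [Between, cycPos_zero, Fin.lt_def, Fin.le_def]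
  rcases cycPos_cases x a with ⟨_, ha⟩ | ⟨_, ha⟩ <;>
    rcases cycPos_cases x b with ⟨_, hb⟩ | ⟨_, hb⟩ <;>
    rcases cycPos_cases x u with ⟨_, hu⟩ | ⟨_, hu⟩ <;>
    rw [ha, hb, hu] <;> omega

theorem interlaced_iff_between (x : Fin N) {a b c f : Fin N} (hac : a ≠ c) (haf : a ≠ f)
    (hbc : b ≠ c) (hbf : b ≠ f) (hcf : c ≠ f) :
    Interlaced {a, b} {c, f} ↔ (Between x a b c ↔ ¬ Between x a b f) := by
  rw [interlaced_iff_between_zero hac haf hbc hbf hcf,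
    between_iff_between_zero_iff x hac hbc, between_iff_between_zero_iff x haf hbf]
  generalize Between 0 a b c = p, Between 0 a b f = q
  tauto

theorem Interlaced.between_iff (x : Fin N) {a b c f : Fin N} (h : Interlaced {a, b} {c, f}) :
    Between x a b c ↔ ¬ Between x a b f :=
  have ⟨hac, haf, hbc, hbf, hcf⟩ := h.ne
  (interlaced_iff_between x hac haf hbc hbf hcf).mp h

theorem interlaced_of_between (x : Fin N) {a b c f : Fin N} (hc : Between x a b c)
    (hf : ¬ Between x a b f) (hfa : f ≠ a) (hfb : f ≠ b) : Interlaced {a, b} {c, f} := by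
  have hca : c ≠ a := by rintro rfl; simp [Between] at hc
  have hcb : c ≠ b := by rintro rfl; simp [Between] at hc
  have hcf : c ≠ f := by rintro rfl; exact hf hc
  exact (interlaced_iff_between x hca.symm hfa.symm hcb.symm hfb.symm hcf).mpr (iff_of_true hc hf)

end Chords

section Edges

variable {N : ℕ}

theorem IsEdge.symm {T : Triangulation N} {a b : Fin N} (h : IsEdge T a b) : IsEdge T b a :=
  ⟨h.1.symm, h.2.imp (fun h => by rwa [BdryAdj, or_comm]) (fun h => by rwa [Finset.pair_comm])⟩

variable [NeZero N]

theorem bdryAdj_iff {a b : Fin N} : BdryAdj N a b ↔ b = a + 1 ∨ a = b + 1 := by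
  simp only [BdryAdj, Fin.ext_iff, Fin.val_add, Fin.val_one', Nat.add_mod_mod]
  rw [eq_comm, @eq_comm _ (a : ℕ)]

theorem not_interlaced_of_bdryAdj {a b : Fin N} (hab : BdryAdj N a b) (c f : Fin N) :
    ¬ Interlaced {a, b} {c, f} := by
  wlog hb : b = a + 1 generalizing a b
  · rw [Finset.pair_comm]
    exact this (by rwa [BdryAdj, or_comm]) ((bdryAdj_iff.mp hab).resolve_left hb)
  intro h
  have hnot : ∀ u, ¬ Between a a b u := by
    intro u hu
    simp only [Between, cycPos, hb, sub_self, add_sub_cancel_left, Fin.val_zero,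
      Fin.val_one'] at hu
    have := Nat.mod_le 1 N
    omega
  exact hnot c ((h.between_iff a).mpr (hnot f))

theorem not_interlaced_of_isEdge {T : Triangulation N} {a b c f : Fin N} (hab : IsEdge T a b)
    (hcf : IsEdge T c f) : ¬ Interlaced {a, b} {c, f} := by
  rcases hab.2 with hab | hab
  · exact not_interlaced_of_bdryAdj hab c f
  rcases hcf.2 with hcf | hcf
  · exact fun h => not_interlaced_of_bdryAdj hcf a b h.symm
  exact fun h => h.elim (T.noncross _ hab _ hcf) (T.noncross _ hcf _ hab)

end Edges

section Fan

variable {n : ℕ} (T : Triangulation (n + 3)) (x : Fin (n + 3))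

open Classical in
noncomputable def fanOffsets : Finset (Fin (n + 3)) :=
  Finset.univ.filter fun r => IsEdge T x (x + r)

noncomputable def fanSize : ℕ := (fanOffsets T x).card

noncomputable def fanOffset (i : ℕ) : Fin (n + 3) := ((fanOffsets T x).sort (· ≤ ·)).getD i 0

noncomputable def fan (i : ℕ) : Fin (n + 3) := x + fanOffset T x i

variable {T x}

theorem mem_fanOffsets {r : Fin (n + 3)} : r ∈ fanOffsets T x ↔ IsEdge T x (x + r) := by
  simp [fanOffsets]

theorem length_sort_fanOffsets : ((fanOffsets T x).sort (· ≤ ·)).length = fanSize T x :=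
  Finset.length_sort _

theorem fanOffset_mem {i : ℕ} (hi : i < fanSize T x) : fanOffset T x i ∈ fanOffsets T x := by
  rw [fanOffset, List.getD_eq_getElem _ _ (length_sort_fanOffsets.symm ▸ hi)]
  exact (Finset.mem_sort _).mp (List.getElem_mem _)

theorem exists_fanOffset_eq {r : Fin (n + 3)} (hr : r ∈ fanOffsets T x) :
    ∃ i < fanSize T x, fanOffset T x i = r := by
  obtain ⟨i, hi, h⟩ := List.mem_iff_getElem.mp ((Finset.mem_sort (· ≤ ·)).mpr hr)
  exact ⟨i, length_sort_fanOffsets ▸ hi, by rw [fanOffset, List.getD_eq_getElem _ _ hi, h]⟩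

theorem fanOffset_lt_fanOffset {i j : ℕ} (hij : i < j) (hj : j < fanSize T x) :
    fanOffset T x i < fanOffset T x j := by
  have hj' := length_sort_fanOffsets.symm ▸ hj
  rw [fanOffset, fanOffset, List.getD_eq_getElem _ _ (hij.trans hj'),
    List.getD_eq_getElem _ _ hj']
  exact (Finset.sortedLT_sort _).strictMono_get
    (show (⟨i, hij.trans hj'⟩ : Fin _) < ⟨j, hj'⟩ from hij)

theorem cycPos_fan (i : ℕ) : cycPos x (fan T x i) = (fanOffset T x i).val :=
  cycPos_add_self x _

theorem cycPos_fan_lt_cycPos_fan_iff {i j : ℕ} (hi : i < fanSize T x) (hj : j < fanSize T x) :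
    cycPos x (fan T x i) < cycPos x (fan T x j) ↔ i < j := by
  rw [cycPos_fan, cycPos_fan, ← Fin.lt_def]
  refine ⟨fun h => ?_, fun h => fanOffset_lt_fanOffset h hj⟩
  by_contra! hji
  rcases hji.lt_or_eq with hji | rfl
  · exact lt_asymm h (fanOffset_lt_fanOffset hji hi)
  · exact lt_irrefl _ h

theorem cycPos_fan_lt_cycPos_fan_succ {i : ℕ} (hi : i + 1 < fanSize T x) :
    cycPos x (fan T x i) < cycPos x (fan T x (i + 1)) :=
  (cycPos_fan_lt_cycPos_fan_iff (by omega) hi).mpr (Nat.lt_succ_self i)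

theorem fan_injective {i j : ℕ} (hi : i < fanSize T x) (hj : j < fanSize T x)
    (h : fan T x i = fan T x j) : i = j := by
  have hij := cycPos_fan_lt_cycPos_fan_iff hi hj
  have hji := cycPos_fan_lt_cycPos_fan_iff hj hi
  rw [h] at hij hji
  omega

theorem isEdge_fan {i : ℕ} (hi : i < fanSize T x) : IsEdge T x (fan T x i) :=
  mem_fanOffsets.mp (fanOffset_mem hi)

theorem exists_fan_eq {y : Fin (n + 3)} (hy : IsEdge T x y) :
    ∃ i < fanSize T x, fan T x i = y := by
  obtain ⟨i, hi, h⟩ :=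
    exists_fanOffset_eq (r := y - x) (mem_fanOffsets.mpr (by rwa [add_sub_cancel]))
  exact ⟨i, hi, by rw [fan, h, add_sub_cancel]⟩

theorem fan_ne_self {i : ℕ} (hi : i < fanSize T x) : fan T x i ≠ x :=
  (isEdge_fan hi).1.symm

theorem cycPos_fan_pos {i : ℕ} (hi : i < fanSize T x) : 0 < cycPos x (fan T x i) :=
  Nat.pos_of_ne_zero (cycPos_eq_zero_iff.not.mpr (fan_ne_self hi))

theorem isEdge_self_add_one : IsEdge T x (x + 1) :=
  ⟨by simp, Or.inl (bdryAdj_iff.mpr (Or.inl rfl))⟩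

theorem isEdge_self_sub_one : IsEdge T x (x - 1) :=
  ⟨by rw [ne_eq, eq_comm, sub_eq_self]; exact one_ne_zero,
    Or.inl (bdryAdj_iff.mpr (Or.inr (sub_add_cancel x 1).symm))⟩

theorem fan_zero : fan T x 0 = x + 1 := by
  obtain ⟨i, hi, h⟩ := exists_fan_eq (isEdge_self_add_one (T := T) (x := x))
  obtain rfl | hi0 := Nat.eq_zero_or_pos i
  · exact h
  have h₁ := (cycPos_fan_lt_cycPos_fan_iff (by omega) hi).mpr hi0
  have h₂ := cycPos_fan_pos (T := T) (x := x) (i := 0) (by omega)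
  rw [h, cycPos_add_self, Fin.val_one] at h₁
  omega

theorem fan_last : fan T x (fanSize T x - 1) = x - 1 := by
  obtain ⟨i, hi, h⟩ := exists_fan_eq (isEdge_self_sub_one (T := T) (x := x))
  obtain rfl | hlt := (Nat.le_sub_one_of_lt hi).eq_or_lt
  · exact h
  have h₁ := (cycPos_fan_lt_cycPos_fan_iff hi (by omega)).mpr hlt
  have h₂ := cycPos_lt x (fan T x (fanSize T x - 1))
  rw [h, sub_eq_add_neg, cycPos_add_self, Fin.coe_neg_one] at h₁
  omega

theorem two_le_fanSize : 2 ≤ fanSize T x := by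
  obtain ⟨i, hi, -⟩ := exists_fan_eq (isEdge_self_add_one (T := T) (x := x))
  by_contra! h
  have h₁ : fan T x 0 = fan T x (fanSize T x - 1) := by rw [show fanSize T x - 1 = 0 by omega]
  rw [fan_zero, fan_last, sub_eq_add_neg] at h₁
  have h₂ := congrArg (cycPos x) h₁
  rw [cycPos_add_self, cycPos_add_self, Fin.val_one, Fin.coe_neg_one] at h₂
  omega

end Fan

section FanGeometry

variable {n : ℕ} {T : Triangulation (n + 3)} {x : Fin (n + 3)}

theorem not_between_fan_succ_of_isEdge {i : ℕ} (hi : i + 1 < fanSize T x) {y : Fin (n + 3)}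
    (hy : IsEdge T x y) : ¬ Between x (fan T x i) (fan T x (i + 1)) y := by
  obtain ⟨j, hj, rfl⟩ := exists_fan_eq hy
  have h₁ := cycPos_fan_lt_cycPos_fan_iff (T := T) (x := x) (i := i) (j := j) (by omega) hj
  have h₂ := cycPos_fan_lt_cycPos_fan_iff (T := T) (x := x) (i := j) (j := i + 1) hj hi
  have h₃ := cycPos_fan_lt_cycPos_fan_iff (T := T) (x := x) (i := i + 1) (j := j) hi hj
  have h₄ := cycPos_fan_lt_cycPos_fan_iff (T := T) (x := x) (i := j) (j := i) hj (by omega)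
  simp only [Between]
  omega

/-- An edge from inside the sector between two consecutive spokes at `x` stays in it: it may
cross neither spoke, and it cannot end at `x` since no spoke lies strictly inside the sector. -/
theorem between_fan_succ_of_isEdge {i : ℕ} (hi : i + 1 < fanSize T x) {c d : Fin (n + 3)}
    (hcd : IsEdge T c d) (hc : Between x (fan T x i) (fan T x (i + 1)) c) :
    d = fan T x i ∨ d = fan T x (i + 1) ∨ Between x (fan T x i) (fan T x (i + 1)) d := by
  by_contra! h
  obtain ⟨hdu, hdv, hd⟩ := h
  obtain rfl | hdx := eq_or_ne d x
  · exact not_between_fan_succ_of_isEdge hi hcd.symm hc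
  have hlt := cycPos_fan_lt_cycPos_fan_succ hi
  have hu := cycPos_fan_pos (T := T) (x := x) (i := i) (by omega)
  have hd0 := Nat.pos_of_ne_zero (cycPos_eq_zero_iff.not.mpr hdx)
  have hdu' := (cycPos_injective x).ne hdu
  have hdv' := (cycPos_injective x).ne hdv
  have hcx : c ≠ x := by rintro rfl; simp only [Between, cycPos_self] at hc; omega
  simp only [Between] at hc hd
  rcases lt_or_gt_of_ne hdu' with hdu' | hdu'
  · refine not_interlaced_of_isEdge (isEdge_fan (i := i) (by omega)) hcd.symm
      (interlaced_of_between x ?_ ?_ hcx (by rintro rfl; omega)) <;>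
      simp only [Between, cycPos_self] <;> omega
  · refine not_interlaced_of_isEdge (isEdge_fan hi) hcd
      (interlaced_of_between x ?_ ?_ hdx hdv) <;> simp only [Between, cycPos_self] <;> omega

theorem isEdge_fan_fan_succ {i : ℕ} (hi : i + 1 < fanSize T x) :
    IsEdge T (fan T x i) (fan T x (i + 1)) := by
  have hlt := cycPos_fan_lt_cycPos_fan_succ hi
  have hu := cycPos_fan_pos (T := T) (x := x) (i := i) (by omega)
  have hv := cycPos_lt x (fan T x (i + 1))
  have huv : fan T x i ≠ fan T x (i + 1) := fun h => by rw [h] at hlt; exact lt_irrefl _ hlt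
  refine ⟨huv, ?_⟩
  by_cases hgap : cycPos x (fan T x (i + 1)) = cycPos x (fan T x i) + 1
  · refine Or.inl (bdryAdj_iff.mpr (Or.inl (cycPos_injective x ?_)))
    rw [cycPos_add_one, Nat.mod_eq_of_lt (by omega), hgap]
  refine Or.inr (T.maximal _ ⟨_, _, huv, fun h => ?_, rfl⟩ fun e he => ?_)
  · rcases bdryAdj_iff.mp h with h | h <;> have h' := congrArg (cycPos x) h <;>
      rw [cycPos_add_one] at h'
    · rw [Nat.mod_eq_of_lt (by omega)] at h'
      exact hgap h'
    · rcases (Nat.lt_or_ge (cycPos x (fan T x (i + 1)) + 1) (n + 3)) with h'' | h''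
      · rw [Nat.mod_eq_of_lt h''] at h'; omega
      · rw [show cycPos x (fan T x (i + 1)) + 1 = n + 3 by omega, Nat.mod_self] at h'; omega
  obtain ⟨c, d, hcd, -, rfl⟩ := T.isDiag e he
  suffices ¬ Interlaced {fan T x i, fan T x (i + 1)} {c, d} from
    ⟨fun h => this (Or.inl h), fun h => this (Or.inr h)⟩
  intro h
  have hcd' : IsEdge T c d := ⟨hcd, Or.inr he⟩
  have hsep := h.between_iff x
  obtain ⟨huc, hud, hvc, hvd, -⟩ := h.ne
  by_cases hc : Between x (fan T x i) (fan T x (i + 1)) c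
  · rcases between_fan_succ_of_isEdge hi hcd' hc with h | h | h
    exacts [hud h.symm, hvd h.symm, hsep.mp hc h]
  · rcases between_fan_succ_of_isEdge hi hcd'.symm (not_not.mp (mt hsep.mpr hc)) with h | h | h
    exacts [huc h.symm, hvc h.symm, hc h]

theorem eq_succ_of_isEdge_fan_fan {i j : ℕ} (hij : i < j) (hj : j < fanSize T x)
    (h : IsEdge T (fan T x i) (fan T x j)) : j = i + 1 := by
  by_contra hne
  have hi₁ : i + 1 < fanSize T x := by omega
  have h₁ := cycPos_fan_lt_cycPos_fan_succ hi₁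
  have h₂ := (cycPos_fan_lt_cycPos_fan_iff (T := T) (x := x) hi₁ hj).mpr (by omega)
  have hu := cycPos_fan_pos (T := T) (x := x) (i := i) (by omega)
  refine not_interlaced_of_isEdge h (isEdge_fan hi₁).symm
    (interlaced_of_between x ?_ ?_ (fan_ne_self (by omega)).symm (fan_ne_self hj).symm) <;>
    simp only [Between, cycPos_self] <;> omega

theorem fan_mem_diags {i : ℕ} (h0 : 0 < i) (hi : i + 1 < fanSize T x) :
    ({x, fan T x i} : Finset (Fin (n + 3))) ∈ T.diags := by
  refine (isEdge_fan (by omega)).2.resolve_left fun h => ?_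
  rcases bdryAdj_iff.mp h with h | h
  · rw [← fan_zero] at h
    have := fan_injective (by omega) (by omega) h
    omega
  · have h' : fan T x i = fan T x (fanSize T x - 1) := by
      rw [fan_last, eq_sub_iff_add_eq]; exact h.symm
    have := fan_injective (by omega) (by omega) h'
    omega

end FanGeometry

section FanTriangles

variable {n : ℕ} {T : Triangulation (n + 3)} {x : Fin (n + 3)}

theorem isTriangle_fan {i : ℕ} (hi : i + 1 < fanSize T x) :
    IsTriangle T {x, fan T x i, fan T x (i + 1)} :=
  ⟨x, _, _, (fan_ne_self (by omega)).symm, (fan_ne_self hi).symm,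
    fun h => by have := fan_injective (by omega) hi h; omega,
    rfl, isEdge_fan (by omega), isEdge_fan hi, isEdge_fan_fan_succ hi⟩

theorem exists_eq_fan_of_isTriangle {t : Finset (Fin (n + 3))} (ht : IsTriangle T t)
    (hx : x ∈ t) : ∃ i, i + 1 < fanSize T x ∧ t = {x, fan T x i, fan T x (i + 1)} := by
  obtain ⟨u, v, rfl, hu, hv, huv⟩ :
      ∃ u v, t = {x, u, v} ∧ IsEdge T x u ∧ IsEdge T x v ∧ IsEdge T u v := by
    obtain ⟨a, b, c, -, -, -, rfl, hab, hac, hbc⟩ := ht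
    simp only [Finset.mem_insert, Finset.mem_singleton] at hx
    rcases hx with rfl | rfl | rfl
    · exact ⟨b, c, rfl, hab, hac, hbc⟩
    · exact ⟨a, c, Finset.insert_comm _ _ _, hab.symm, hbc, hac⟩
    · exact ⟨a, b, by rw [Finset.pair_comm b, Finset.insert_comm], hac.symm, hbc.symm, hab⟩
  obtain ⟨i, hi, rfl⟩ := exists_fan_eq hu
  obtain ⟨j, hj, rfl⟩ := exists_fan_eq hv
  rcases lt_trichotomy i j with hij | rfl | hij
  · obtain rfl := eq_succ_of_isEdge_fan_fan hij hj huv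
    exact ⟨i, hj, rfl⟩
  · exact absurd rfl huv.1
  · obtain rfl := eq_succ_of_isEdge_fan_fan hij hi huv.symm
    exact ⟨j, hi, congrArg (insert x) (Finset.pair_comm _ _)⟩

theorem eq_of_fan_triangle_eq {i j : ℕ} (hi : i + 1 < fanSize T x) (hj : j + 1 < fanSize T x)
    (h : ({x, fan T x i, fan T x (i + 1)} : Finset (Fin (n + 3))) =
      {x, fan T x j, fan T x (j + 1)}) : i = j := by
  have h₁ : fan T x i ∈ ({x, fan T x j, fan T x (j + 1)} : Finset (Fin (n + 3))) := by
    simp [← h]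
  have h₂ : fan T x j ∈ ({x, fan T x i, fan T x (i + 1)} : Finset (Fin (n + 3))) := by
    simp [h]
  simp only [Finset.mem_insert, Finset.mem_singleton] at h₁ h₂
  rcases h₁ with h₁ | h₁ | h₁
  · exact absurd h₁ (fan_ne_self (by omega))
  · exact fan_injective (by omega) (by omega) h₁
  rcases h₂ with h₂ | h₂ | h₂
  · exact absurd h₂ (fan_ne_self (by omega))
  · exact (fan_injective (by omega) (by omega) h₂).symm
  have := fan_injective (by omega) hj h₁
  have := fan_injective (by omega) hi h₂
  omega

end FanTriangles

noncomputable def fanColour {n : ℕ} (C : ColouredTri (n + 3) 2) (x : Fin (n + 3)) (i : ℕ) : Fin 2 :=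
  if h : i + 1 < fanSize C.T x then C.col ⟨_, isTriangle_fan h⟩ else 0

theorem weight_eq_sum_fanColour {n : ℕ} (C : ColouredTri (n + 3) 2) (x : Fin (n + 3)) :
    weight C x = ∑ i ∈ Finset.range (fanSize C.T x - 1), signVal (fanColour C x i) := by
  classical
  rw [weight, finsum_eq_sum_of_fintype, ← Finset.sum_filter]
  symm
  refine Finset.sum_bij
    (fun i hi => ⟨_, isTriangle_fan (T := C.T) (x := x) (i := i)
      (by rw [Finset.mem_range] at hi; omega)⟩)
    (fun i _ => by simp) (fun i hi j hj h => ?_) (fun t ht => ?_) (fun i hi => ?_)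
  · rw [Finset.mem_range] at hi hj
    exact eq_of_fan_triangle_eq (by omega) (by omega) (congrArg Subtype.val h)
  · rw [Finset.mem_filter] at ht
    obtain ⟨i, hi, h⟩ := exists_eq_fan_of_isTriangle t.2 ht.2
    exact ⟨i, Finset.mem_range.mpr (by omega), Subtype.ext h.symm⟩
  · rw [Finset.mem_range] at hi
    rw [fanColour, dif_pos (by omega)]

theorem zmod_three_eq_neg_of_ne {a b : ZMod 3} (ha : a ≠ 0) (hb : b ≠ 0) (h : a ≠ b) : a = -b := by
  revert a b; decide

/-- Every step `f (i + 1) - f i` equals `ε * s i` for one fixed `ε ≠ 0`,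
so `f m - f 0 = ε * ∑ s i`. -/
theorem eq_iff_sum_eq_zero_of_turns {f s : ℕ → ZMod 3} {m : ℕ} (hs : ∀ i, s i ≠ 0)
    (hstep : ∀ i < m, f (i + 1) ≠ f i)
    (hturn : ∀ i, i + 2 ≤ m → (f (i + 2) = f i ↔ s (i + 1) = -s i)) :
    f m = f 0 ↔ ∑ i ∈ Finset.range m, s i = 0 := by
  rcases Nat.eq_zero_or_pos m with rfl | hm
  · simp
  set ε := (f 1 - f 0) / s 0
  have hε : ε ≠ 0 := div_ne_zero (sub_ne_zero.mpr (hstep 0 hm)) (hs 0)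
  have hsteps : ∀ i < m, f (i + 1) - f i = ε * s i := by
    intro i hi
    induction i with
    | zero => exact (div_mul_cancel₀ _ (hs 0)).symm
    | succ i ih =>
      have ih := ih (by omega)
      by_cases hflip : s (i + 1) = -s i
      · have hback := (hturn i hi).mpr hflip
        calc f (i + 2) - f (i + 1) = -(f (i + 1) - f i) := by rw [hback]; ring
          _ = ε * s (i + 1) := by rw [ih, hflip]; ring
      · have hsame : s (i + 1) = s i :=
          by_contra fun h => hflip (zmod_three_eq_neg_of_ne (hs _) (hs _) h)
        have hD : f (i + 2) - f (i + 1) = f (i + 1) - f i := by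
          by_contra h
          refine mt (hturn i hi).mp hflip ?_
          linear_combination zmod_three_eq_neg_of_ne (sub_ne_zero.mpr (hstep (i + 1) hi))
            (sub_ne_zero.mpr (hstep i (by omega))) h
        rw [hD, ih, hsame]
  have htel : f m - f 0 = ε * ∑ i ∈ Finset.range m, s i := by
    rw [← Finset.sum_range_sub, Finset.mul_sum]
    exact Finset.sum_congr rfl fun i hi => hsteps i (Finset.mem_range.mp hi)
  rw [← sub_eq_zero, htel, mul_eq_zero, or_iff_right hε]

theorem exists_injOn_compl_singleton (e : Fin 4) : ∃ φ : Fin 4 → ZMod 3, Set.InjOn φ {e}ᶜ := by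
  have key : ∀ e u v : Fin 4, u ≠ e → v ≠ e →
      (((u - e).val - 1 : ℕ) : ZMod 3) = (((v - e).val - 1 : ℕ) : ZMod 3) → u = v := by
    decide
  exact ⟨_, fun u hu v hv => key e u v hu hv⟩

theorem signVal_ne_zero (c : Fin 2) : signVal c ≠ 0 := by
  revert c; decide

theorem signVal_eq_neg_iff {p q : Fin 2} : signVal q = -signVal p ↔ q ≠ p := by
  revert p q; decide

section Compatible

variable {n : ℕ} {C : ColouredTri (n + 3) 2} {col : Fin (n + 3) → Fin 4} {x : Fin (n + 3)}

theorem col_eq_fanColour {i : ℕ} (hi : i + 1 < fanSize C.T x) {t : Finset (Fin (n + 3))}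
    (ht : IsTriangle C.T t) (h : t = {x, fan C.T x i, fan C.T x (i + 1)}) :
    C.col ⟨t, ht⟩ = fanColour C x i := by
  subst h
  rw [fanColour, dif_pos hi]

theorem Compatible.fan_ne_centre (hcomp : Compatible C col) {i : ℕ} (hi : i < fanSize C.T x) :
    col (fan C.T x i) ≠ col x :=
  (hcomp.1 _ _ (isEdge_fan hi)).symm

theorem Compatible.fan_succ_ne (hcomp : Compatible C col) {i : ℕ} (hi : i + 1 < fanSize C.T x) :
    col (fan C.T x (i + 1)) ≠ col (fan C.T x i) :=
  (hcomp.1 _ _ (isEdge_fan_fan_succ hi)).symm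

theorem Compatible.fan_add_two_eq_iff (hcomp : Compatible C col) {i : ℕ}
    (hi : i + 2 < fanSize C.T x) :
    col (fan C.T x (i + 2)) = col (fan C.T x i) ↔ fanColour C x (i + 1) ≠ fanColour C x i := by
  have hswap : ({x, fan C.T x (i + 1), fan C.T x i} : Finset (Fin (n + 3))) =
      {x, fan C.T x i, fan C.T x (i + 1)} := congrArg (insert x) (Finset.pair_comm _ _)
  have h₁ : IsTriangle C.T {x, fan C.T x (i + 1), fan C.T x i} := hswap ▸ isTriangle_fan (by omega)
  have hne : fan C.T x i ≠ fan C.T x (i + 2) := fun h => by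
    have := fan_injective (by omega) hi h; omega
  rw [eq_comm, hcomp.2 x _ _ _ h₁ (isTriangle_fan hi) hne (fan_mem_diags (by omega) hi),
    col_eq_fanColour (by omega) h₁ hswap, col_eq_fanColour hi (isTriangle_fan hi) rfl, ne_comm]

end Compatible

/-- A vertex has weight `0` iff its two neighbours along the polygon boundary get
the same colour in the 4-colouring associated to the signed triangulation. -/
theorem weight_zero_iff_boundary_neighbours_same_colour (n : ℕ)
    (C : ColouredTri (n + 3) 2) (col : Fin (n + 3) → Fin 4)
    (hcomp : Compatible C col) (x : Fin (n + 3)) :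
    weight C x = 0 ↔ col (x - 1) = col (x + 1) := by
  obtain ⟨φ, hφ⟩ := exists_injOn_compl_singleton (col x)
  have hφ_fan {i j : ℕ} (hi : i < fanSize C.T x) (hj : j < fanSize C.T x) :
      φ (col (fan C.T x i)) = φ (col (fan C.T x j)) ↔ col (fan C.T x i) = col (fan C.T x j) :=
    hφ.eq_iff (hcomp.fan_ne_centre hi) (hcomp.fan_ne_centre hj)
  have hk := two_le_fanSize (T := C.T) (x := x)
  rw [weight_eq_sum_fanColour, ← fan_zero (T := C.T), ← fan_last (T := C.T),
    ← hφ_fan (by omega) (by omega),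
    eq_iff_sum_eq_zero_of_turns (f := fun i => φ (col (fan C.T x i))) (fun i => signVal_ne_zero _)
      (fun i hi => (hφ_fan (by omega) (by omega)).not.mpr (hcomp.fan_succ_ne (by omega)))
      (fun i hi => by
        rw [hφ_fan (by omega) (by omega), hcomp.fan_add_two_eq_iff (by omega), signVal_eq_neg_iff])]

end PolyFlip
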